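/- arXiv:2605.04543 — 6 statements merged into one kernel-verified Lean document; each statement's English description precedes it below -/
import Mathlib

section
/- Under the scaled optimal transport constraints, the upper bound ∑_u min{M_s^¬(u), p̃·M_b(u)} on the diagonal mass is achieved: there exists a feasible transport plan γ with γ(u,u) = min{M_s^¬(u), p̃·M_b(u)} for all u ∈ Σ. -/
theorem scaled_ot_diagonal_bound_achieved {V : Type*} [Fintype V] [DecidableEq V]
    (Mb Msneg : V → ℝ) (ptilde : ℝ)
    (hMb : ∀ x, 0 ≤ Mb x) (hMs : ∀ x, 0 ≤ Msneg x)
    (hMbs : ∑ x, Mb x = 1) (hMss : ∑ x, Msneg x = 1)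
    (hp0 : 0 ≤ ptilde) (hp1 : ptilde ≤ 1) :
    ∃ γ : V → Option V → ℝ,
      (∀ u t, 0 ≤ γ u t) ∧
      (∀ u, ∑ t, γ u t = Msneg u) ∧
      (∀ t, ∑ u, γ u (some t) = ptilde * Mb t) ∧
      (∑ u, γ u none = 1 - ptilde) ∧
      (∀ u, γ u (some u) = min (Msneg u) (ptilde * Mb u)) := by
  classical
  set m : V → ℝ := fun u => min (Msneg u) (ptilde * Mb u) with hm
  set a : V → ℝ := fun u => Msneg u - m u with ha
  set b : V → ℝ := fun t => ptilde * Mb t - m t with hb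
  set S : ℝ := 1 - ∑ u, m u with hS
  have hm_le_Ms : ∀ u, m u ≤ Msneg u := fun u => min_le_left _ _
  have hm_le_Mb : ∀ u, m u ≤ ptilde * Mb u := fun u => min_le_right _ _
  have hm_nonneg : ∀ u, 0 ≤ m u := fun u => le_min (hMs u) (mul_nonneg hp0 (hMb u))
  have ha_nonneg : ∀ u, 0 ≤ a u := fun u => sub_nonneg.2 (hm_le_Ms u)
  have hb_nonneg : ∀ u, 0 ≤ b u := fun u => sub_nonneg.2 (hm_le_Mb u)
  have hsum_a : ∑ u, a u = S := by
    simp [ha, Finset.sum_sub_distrib, hMss, hS]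
  have hsum_b : ∑ u, b u = S - (1 - ptilde) := by
    simp only [hb, Finset.sum_sub_distrib, ← Finset.mul_sum, hMbs, hS]
    ring
  have hS_nonneg : 0 ≤ S := by
    have h1 : ∑ u, m u ≤ ∑ u, Msneg u := Finset.sum_le_sum fun u _ => hm_le_Ms u
    rw [hMss] at h1
    simp [hS]; linarith
  have hab : ∀ u, a u * b u = 0 := by
    intro u
    rcases min_choice (Msneg u) (ptilde * Mb u) with h | h
    · have : a u = 0 := by simp [ha, hm, h]
      simp [this]
    · have : b u = 0 := by simp [hb, hm, h]
      simp [this]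
  rcases eq_or_lt_of_le hS_nonneg with hS0 | hSpos
  · -- S = 0 : all residuals vanish, ptilde = 1
    have ha0 : ∀ u, a u = 0 := by
      intro u
      have := (Finset.sum_eq_zero_iff_of_nonneg (fun u _ => ha_nonneg u)).1
        (by rw [hsum_a, ← hS0]) u (Finset.mem_univ u)
      exact this
    have hsb_nonneg : 0 ≤ ∑ u, b u := Finset.sum_nonneg fun u _ => hb_nonneg u
    have hp : ptilde = 1 := by rw [hsum_b, ← hS0] at hsb_nonneg; linarith
    have hb0 : ∀ u, b u = 0 := by
      intro u
      have hsb : ∑ u, b u = 0 := by rw [hsum_b, ← hS0, hp]; ring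
      exact (Finset.sum_eq_zero_iff_of_nonneg (fun u _ => hb_nonneg u)).1 hsb u
        (Finset.mem_univ u)
    refine ⟨fun u t => match t with
      | some t => if t = u then m u else 0
      | none => 0, ?_, ?_, ?_, ?_, ?_⟩
    · rintro u (_ | t)
      · exact le_refl 0
      · dsimp only; split <;> [exact hm_nonneg u; exact le_refl 0]
    · intro u
      rw [Fintype.sum_option]
      simp only [Finset.sum_ite_eq', Finset.mem_univ, if_true]
      have := ha0 u
      simp only [ha] at this
      linarith
    · intro t
      simp only [Finset.sum_ite_eq, Finset.mem_univ, if_true]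
      have := hb0 t
      simp only [hb] at this
      linarith
    · simp [hp]
    · intro u; simp [hm]
  · -- S > 0
    have hSne : S ≠ 0 := ne_of_gt hSpos
    refine ⟨fun u t => match t with
      | some t => (if t = u then m u else 0) + a u * b t / S
      | none => a u * (1 - ptilde) / S, ?_, ?_, ?_, ?_, ?_⟩
    · rintro u (_ | t)
      · exact div_nonneg (mul_nonneg (ha_nonneg u) (by linarith)) hS_nonneg
      · dsimp only
        have h2 : 0 ≤ a u * b t / S :=
          div_nonneg (mul_nonneg (ha_nonneg u) (hb_nonneg t)) hS_nonneg
        split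
        · exact add_nonneg (hm_nonneg u) h2
        · simpa using h2
    · intro u
      rw [Fintype.sum_option]
      dsimp only
      rw [Finset.sum_add_distrib]
      simp only [Finset.sum_ite_eq', Finset.mem_univ, if_true]
      have hs : ∑ t, a u * b t / S = a u * (S - (1 - ptilde)) / S := by
        rw [← Finset.sum_div, ← Finset.mul_sum, hsum_b]
      rw [hs]
      have hMu : Msneg u = m u + a u := by simp [ha]
      field_simp
      rw [hMu]; ring
    · intro t
      dsimp only
      rw [Finset.sum_add_distrib]
      simp only [Finset.sum_ite_eq, Finset.mem_univ, if_true]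
      have hs : ∑ u, a u * b t / S = b t := by
        rw [← Finset.sum_div, ← Finset.sum_mul, hsum_a, mul_comm,
          mul_div_assoc, div_self hSne, mul_one]
      rw [hs]
      have : ptilde * Mb t = m t + b t := by simp [hb]
      linarith
    · dsimp only
      rw [← Finset.sum_div, ← Finset.sum_mul, hsum_a, mul_comm,
        mul_div_assoc, div_self hSne, mul_one]
    · intro u
      dsimp only
      rw [if_pos rfl, hab, zero_div, add_zero]
end

section
/- Let r : {1,…,γ} → ℝ≥0 be acceptance ratios. Define p_k^Local = ∏_{i=1}^k min{r(i),1} and p_k^Block recursively by p_0^Block = 1 and p_k^Block = min{r(k)·p_{k-1}^Block, 1}. Then p_k^Block ≥ p_k^Local for all 1 ≤ k ≤ γ. -/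
/-- Block verification prefix acceptance probability: multiply then truncate. -/
def blockP (r : ℕ → ℝ) : ℕ → ℝ
  | 0 => 1
  | k + 1 => min (r (k + 1) * blockP r k) 1

theorem block_ge_local (r : ℕ → ℝ) (hr : ∀ i, 0 ≤ r i) (γ : ℕ) :
    ∀ k, 1 ≤ k → k ≤ γ →
      blockP r k ≥ ∏ i ∈ Finset.Icc 1 k, min (r i) 1 := by
  have hP0 : ∀ k, 0 ≤ ∏ i ∈ Finset.Icc 1 k, min (r i) 1 :=
    fun k => Finset.prod_nonneg fun i _ => le_min (hr i) zero_le_one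
  have hP1 : ∀ k, ∏ i ∈ Finset.Icc 1 k, min (r i) 1 ≤ 1 :=
    fun k => Finset.prod_le_one (fun i _ => le_min (hr i) zero_le_one)
      (fun i _ => min_le_right _ _)
  have main : ∀ k, blockP r k ≥ ∏ i ∈ Finset.Icc 1 k, min (r i) 1 := by
    intro k
    induction k with
    | zero => simp [blockP]
    | succ k ih =>
      rw [Finset.prod_Icc_succ_top (Nat.le_add_left 1 k)]
      simp only [blockP]
      refine le_min ?_ ?_
      · rw [mul_comm]
        exact mul_le_mul (min_le_left _ _) ih (hP0 k) (hr _)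
      · calc (∏ i ∈ Finset.Icc 1 k, min (r i) 1) * min (r (k+1)) 1
            ≤ 1 * 1 := mul_le_mul (hP1 k) (min_le_right _ _) (le_min (hr _) zero_le_one) zero_le_one
          _ = 1 := one_mul 1
  exact fun k _ _ => main k
end

section
/- In the UniVer allocation at node v with prefix probability p̃ ∈ [0,1]: the deterministic children H = Top_{m−1}(M_s), sampled child u_m ∼ M_s^¬, and acceptance probabilities p_v(u_m) = min{1, p̃·M_b(u_m)/M_s^¬(u_m)}, p_v(t) = [p̃·M_b(t) − M_s^¬(t)]_+ · (1−p_v(u_m))/Z for t ≠ u_m, and p_v(¬v) = (1−p_v(u_m))(1−p̃)/Z, where Z = 1 − p̃ + ∑_x [p̃·M_b(x) − M_s^¬(x)]_+, satisfy ∑_{u∈Σ} p_v(u) + p_v(¬v) = 1 for every realization of u_m with M_s^¬(u_m) > 0. -/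
theorem univer_allocation_sums_to_one {V : Type*} [Fintype V] [DecidableEq V]
    (Mb Msneg : V → ℝ) (ptilde : ℝ) (H : Finset V) (m : ℕ)
    (hcard : H.card = m - 1)
    (hMb : ∀ x, 0 ≤ Mb x) (hMs : ∀ x, 0 ≤ Msneg x)
    (hMbs : ∑ x, Mb x = 1) (hMss : ∑ x, Msneg x = 1)
    (hp0 : 0 ≤ ptilde) (hp1 : ptilde ≤ 1)
    (hsupp : ∀ x ∈ H, Msneg x = 0)
    (Z : ℝ) (hZ : Z = 1 - ptilde + ∑ x, max (ptilde * Mb x - Msneg x) 0)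
    (hZpos : 0 < Z)
    (um : V) (hum : 0 < Msneg um) :
    (min 1 (ptilde * Mb um / Msneg um)
      + ∑ t ∈ Finset.univ.erase um,
          max (ptilde * Mb t - Msneg t) 0 * (1 - min 1 (ptilde * Mb um / Msneg um)) / Z)
      + (1 - min 1 (ptilde * Mb um / Msneg um)) * (1 - ptilde) / Z = 1 := by
  rcases le_or_gt (Msneg um) (ptilde * Mb um) with h | h
  · have hmin : min 1 (ptilde * Mb um / Msneg um) = 1 :=
      min_eq_left ((one_le_div hum).mpr h)
    rw [hmin]
    simp
  · have hmin : min 1 (ptilde * Mb um / Msneg um) = ptilde * Mb um / Msneg um :=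
      min_eq_right ((div_le_one hum).mpr h.le)
    rw [hmin]
    have hmax : max (ptilde * Mb um - Msneg um) 0 = 0 := max_eq_right (by linarith)
    have hsum : ∑ t ∈ Finset.univ.erase um,
        max (ptilde * Mb t - Msneg t) 0 * (1 - ptilde * Mb um / Msneg um) / Z
        = (∑ x, max (ptilde * Mb x - Msneg x) 0) * (1 - ptilde * Mb um / Msneg um) / Z := by
      rw [← Finset.sum_div, ← Finset.sum_mul,
        Finset.sum_erase_eq_sub (Finset.mem_univ um), hmax, sub_zero]
    rw [hsum]
    have hS : ∑ x, max (ptilde * Mb x - Msneg x) 0 = Z - 1 + ptilde := by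
      rw [hZ]; ring
    rw [hS]
    field_simp
    ring
end

section
/- For a deterministic (Top_{m−1}) token t ∈ H, the expected UniVer acceptance probability over the randomness of the sampled child u_m ∼ M_s^¬ satisfies E_{u_m}[p_v(t)] = p̃·M_b(t), where p_v(t) = p̃·M_b(t)·(1−p_v(u_m))/Z and p_v(u_m) = min{1, p̃·M_b(u_m)/M_s^¬(u_m)}. -/
theorem univer_expected_acceptance_top_token {V : Type*} [Fintype V] [DecidableEq V]
    (Mb Msneg : V → ℝ) (ptilde : ℝ) (H : Finset V)
    (hMb : ∀ x, 0 ≤ Mb x) (hMs : ∀ x, 0 ≤ Msneg x)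
    (hMbs : ∑ x, Mb x = 1) (hMss : ∑ x, Msneg x = 1)
    (hp0 : 0 < ptilde) (hp1 : ptilde ≤ 1)
    (hsupp : ∀ x ∈ H, Msneg x = 0)
    (Z : ℝ) (hZ : Z = 1 - ∑ x ∈ Hᶜ, min (ptilde * Mb x) (Msneg x))
    (hZpos : 0 < Z)
    (t : V) (ht : t ∈ H) :
    ∑ um, Msneg um *
        (ptilde * Mb t * (1 - min 1 (ptilde * Mb um / Msneg um)) / Z)
      = ptilde * Mb t := by
  have key : ∀ x : V, Msneg x * min 1 (ptilde * Mb x / Msneg x)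
      = min (ptilde * Mb x) (Msneg x) := by
    intro x
    rcases eq_or_lt_of_le (hMs x) with h | h
    · simp [← h]; exact mul_nonneg hp0.le (hMb x)
    · rw [mul_min_of_nonneg _ _ h.le, mul_one, mul_div_cancel₀ _ h.ne',
        min_comm]
  have hfull : ∑ x, min (ptilde * Mb x) (Msneg x)
      = ∑ x ∈ Hᶜ, min (ptilde * Mb x) (Msneg x) := by
    rw [← Finset.sum_compl_add_sum Hᶜ]
    simp only [compl_compl]
    rw [Finset.sum_eq_zero, zero_add]
    intro x hx
    simp [hsupp x hx, min_eq_right (mul_nonneg hp0.le (hMb x))]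
  have hsum : ∑ um, Msneg um * (1 - min 1 (ptilde * Mb um / Msneg um)) = Z := by
    simp only [mul_sub, mul_one, key]
    rw [Finset.sum_sub_distrib, hMss, hfull, hZ]
  calc ∑ um, Msneg um * (ptilde * Mb t * (1 - min 1 (ptilde * Mb um / Msneg um)) / Z)
      = (∑ um, Msneg um * (1 - min 1 (ptilde * Mb um / Msneg um))) * (ptilde * Mb t / Z) := by
        rw [Finset.sum_mul]; apply Finset.sum_congr rfl; intro x _; ring
    _ = ptilde * Mb t := by rw [hsum]; field_simp
end

section
/- In UniVer's allocation phase with p̃ = 1 (root node), the rejection probability vanishes: p_v(¬v) = (1−p_v(u_m))(1−p̃)/Z = 0, so the acceptance probabilities p_v(u) over u ∈ Σ form a probability distribution equal in expectation (over u_m ∼ M_s^¬) to the target M_b. -/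
/-!
Writing `q = M_s^¬` and `p = M_b`, the draft token `u_m` is accepted with weight
`q u_m · min 1 (p u_m / q u_m) = min (p u_m) (q u_m)`, and a rejected draft carries the residual
mass `q u_m · (1 - min 1 (p u_m / q u_m)) = [q u_m - p u_m]_+`. Since `q` vanishes on `H`, the total
residual mass is exactly `Z`, so averaging over `u_m` the resampling weight of `t` becomes
`[p t - q t]_+ · (Z - [q t - p t]_+) / Z = [p t - q t]_+`, and
`min (p t) (q t) + [p t - q t]_+ = p t`.
-/

open Finset

lemma mul_min_one_div {a b : ℝ} (ha : 0 ≤ a) (hb : 0 ≤ b) : a * min 1 (b / a) = min a b := by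
  rcases ha.eq_or_lt with rfl | ha
  · simp [hb]
  · rw [mul_min_of_nonneg _ _ ha.le, mul_one, mul_div_cancel₀ _ ha.ne']

lemma mul_one_sub_min_one_div {a b : ℝ} (ha : 0 ≤ a) (hb : 0 ≤ b) :
    a * (1 - min 1 (b / a)) = max (a - b) 0 := by
  rw [mul_sub, mul_one, mul_min_one_div ha hb]
  rcases le_total a b with h | h
  · rw [min_eq_left h, max_eq_right (by linarith), sub_self]
  · rw [min_eq_right h, max_eq_left (by linarith)]

lemma max_sub_zero_eq_sub_min (a b : ℝ) : max (a - b) 0 = a - min b a := by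
  rcases le_total a b with h | h
  · rw [min_eq_right h, max_eq_right (by linarith), sub_self]
  · rw [min_eq_left h, max_eq_left (by linarith)]

lemma min_add_max_sub_zero (a b : ℝ) : min a b + max (a - b) 0 = a := by
  rw [max_sub_zero_eq_sub_min, min_comm]
  ring

lemma max_sub_zero_mul_max_sub_zero (a b : ℝ) : max (a - b) 0 * max (b - a) 0 = 0 := by
  rcases le_total a b with h | h
  · rw [max_eq_right (by linarith), zero_mul]
  · rw [max_eq_right (sub_nonpos.mpr h), mul_zero]

section Residual

variable {V : Type*} [Fintype V] [DecidableEq V] {p q : V → ℝ}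

lemma sum_max_sub_zero_eq_one_sub_sum_min (hp : ∀ x, 0 ≤ p x) (hq : ∑ x, q x = 1)
    {H : Finset V} (hH : ∀ x ∈ H, q x = 0) :
    ∑ x, max (q x - p x) 0 = 1 - ∑ x ∈ Hᶜ, min (p x) (q x) := by
  have hmin_H : ∑ x ∈ H, min (p x) (q x) = 0 :=
    sum_eq_zero fun x hx => by rw [hH x hx, min_eq_right (hp x)]
  simp_rw [max_sub_zero_eq_sub_min]
  rw [sum_sub_distrib, hq, ← sum_add_sum_compl H, hmin_H, zero_add]

lemma sum_mul_acceptance_eq (hp : ∀ x, 0 ≤ p x) (hq : ∀ x, 0 ≤ q x)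
    {Z : ℝ} (hZ : ∑ x, max (q x - p x) 0 = Z) (hZ0 : Z ≠ 0) (t : V) :
    ∑ um, q um *
        (if um = t then min 1 (p t / q t)
         else max (p t - q t) 0 * (1 - min 1 (p um / q um)) / Z) = p t := by
  have hrest : ∑ um ∈ univ.erase t, max (q um - p um) 0 = Z - max (q t - p t) 0 := by
    rw [← hZ, ← add_sum_erase univ _ (mem_univ t), add_sub_cancel_left]
  have hresample : ∑ um ∈ univ.erase t, q um *
        (if um = t then min 1 (p t / q t)
         else max (p t - q t) 0 * (1 - min 1 (p um / q um)) / Z)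
      = max (p t - q t) 0 * (Z - max (q t - p t) 0) / Z := by
    rw [← hrest, mul_sum, sum_div]
    refine sum_congr rfl fun um hum => ?_
    rw [if_neg (ne_of_mem_erase hum), ← mul_one_sub_min_one_div (hq um) (hp um)]
    ring
  rw [← add_sum_erase univ _ (mem_univ t), if_pos rfl, hresample,
    mul_min_one_div (hq t) (hp t), mul_sub, max_sub_zero_mul_max_sub_zero, sub_zero,
    mul_div_cancel_right₀ _ hZ0, min_comm, min_add_max_sub_zero]

end Residual

theorem univer_root_lossless_general {V : Type*} [Fintype V] [DecidableEq V]
    (Mb Msneg : V → ℝ) (H : Finset V)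
    (hMb : ∀ x, 0 ≤ Mb x) (hMs : ∀ x, 0 ≤ Msneg x)
    (hMss : ∑ x, Msneg x = 1)
    (hsupp : ∀ x ∈ H, Msneg x = 0)
    (Z : ℝ) (hZ : Z = 1 - ∑ x ∈ Hᶜ, min (Mb x) (Msneg x))
    (hZpos : 0 < Z) :
    (∀ um : V, (1 - min 1 (Mb um / Msneg um)) * (1 - (1 : ℝ)) / Z = 0) ∧
    (∀ t : V,
      ∑ um, Msneg um *
        (if um = t then min 1 (Mb t / Msneg t)
         else max (Mb t - Msneg t) 0 * (1 - min 1 (Mb um / Msneg um)) / Z)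
      = Mb t) := by
  refine ⟨fun um => by simp, fun t => ?_⟩
  have hresidual : ∑ x, max (Msneg x - Mb x) 0 = Z := by
    rw [hZ, sum_max_sub_zero_eq_one_sub_sum_min hMb hMss hsupp]
  exact sum_mul_acceptance_eq hMb hMs hresidual hZpos.ne' t

theorem univer_root_lossless {V : Type*} [Fintype V] [DecidableEq V]
    (Mb Msneg : V → ℝ) (H : Finset V)
    (hMb : ∀ x, 0 ≤ Mb x) (hMs : ∀ x, 0 ≤ Msneg x)
    (hMbs : ∑ x, Mb x = 1) (hMss : ∑ x, Msneg x = 1)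
    (hsupp : ∀ x ∈ H, Msneg x = 0)
    (Z : ℝ) (hZ : Z = 1 - ∑ x ∈ Hᶜ, min (Mb x) (Msneg x))
    (hZpos : 0 < Z) :
    (∀ um : V, (1 - min 1 (Mb um / Msneg um)) * (1 - (1 : ℝ)) / Z = 0) ∧
    (∀ t : V,
      ∑ um, Msneg um *
        (if um = t then min 1 (Mb t / Msneg t)
         else max (Mb t - Msneg t) 0 * (1 - min 1 (Mb um / Msneg um)) / Z)
      = Mb t) :=
  univer_root_lossless_general Mb Msneg H hMb hMs hMss hsupp Z hZ hZpos
end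

section
/- Let X be a finite rooted tree where each node v is either accepted or rejected in a verification process, with E[p_v(¬v)] = 1 − p̃_v (expected rejection mass equals one minus the prefix acceptance probability) for each parent v. If a two-stage process accepts a node's children set with marginal expected acceptance E[p_v(u)] = p̃_v·M_b(u|v) for each token u, then the probability of accepting at least one node in the subtree of v (including fallback to v itself with probability 1 − (1−p̃_v^res)∏_{u∈C(v)}(1−p̃_u)) equals p̃_v. -/
/-!
Writing `S j = ∑ i < j, p ω i` for the acceptance mass of the first `j` children, the conditional
rejection probabilities telescope: `1 - p ω j / (1 - S j) = (1 - S (j + 1)) / (1 - S j)`. Hence the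
children all reject with probability `1 - S m`, and the fallback factor `pneg ω / (1 - S m)` turns
this into `pneg ω`. Averaging `1 - pneg ω` against `w` gives `1 - (1 - pv) = pv`.
-/

open Finset

theorem prod_one_sub_div_one_sub_sum_range {K : Type*} [Field K] (a : ℕ → K) {n : ℕ}
    (h : ∀ j < n, 1 - ∑ i ∈ range j, a i ≠ 0) :
    ∏ j ∈ range n, (1 - a j / (1 - ∑ i ∈ range j, a i)) = 1 - ∑ i ∈ range n, a i := by
  induction n with
  | zero => simp
  | succ n ih =>
    rw [prod_range_succ, ih fun j hj => h j (Nat.lt_succ_of_lt hj), sum_range_succ,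
      one_sub_div (h n n.lt_succ_self), mul_div_cancel₀ _ (h n n.lt_succ_self)]
    ring

theorem prod_one_sub_div_one_sub_sum_range_mul_div {K : Type*} [Field K] (a : ℕ → K) (q : K)
    {n : ℕ} (h : ∀ j ≤ n, 1 - ∑ i ∈ range j, a i ≠ 0) :
    (∏ j ∈ range n, (1 - a j / (1 - ∑ i ∈ range j, a i))) *
      (1 - (1 - q / (1 - ∑ i ∈ range n, a i))) = q := by
  rw [prod_one_sub_div_one_sub_sum_range a fun j hj => h j hj.le, sub_sub_cancel,
    mul_div_cancel₀ _ (h n le_rfl)]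

theorem subtree_acceptance_probability_general {Ω : Type*} [Fintype Ω]
    (m : ℕ) (w : Ω → ℝ) (p : Ω → ℕ → ℝ) (pneg : Ω → ℝ) (pv : ℝ)
    (hws : ∑ ω, w ω = 1)
    (hpartial : ∀ ω, ∀ j ≤ m, ∑ i ∈ Finset.range j, p ω i < 1)
    (hE : ∑ ω, w ω * pneg ω = 1 - pv) :
    ∑ ω, w ω *
      (1 - (∏ j ∈ Finset.range m,
              (1 - p ω j / (1 - ∑ i ∈ Finset.range j, p ω i))) *
           (1 - (1 - pneg ω / (1 - ∑ i ∈ Finset.range m, p ω i))))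
      = pv := by
  have hreject : ∀ ω, (∏ j ∈ range m, (1 - p ω j / (1 - ∑ i ∈ range j, p ω i))) *
      (1 - (1 - pneg ω / (1 - ∑ i ∈ range m, p ω i))) = pneg ω := fun ω =>
    prod_one_sub_div_one_sub_sum_range_mul_div (p ω) (pneg ω) fun j hj =>
      (sub_pos.mpr (hpartial ω j hj)).ne'
  calc _ = ∑ ω, w ω * (1 - pneg ω) := by simp only [hreject]
    _ = pv := by simp only [mul_one_sub, sum_sub_distrib, hws, hE, sub_sub_cancel]

theorem subtree_acceptance_probability {Ω : Type*} [Fintype Ω]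
    (m : ℕ) (w : Ω → ℝ) (p : Ω → ℕ → ℝ) (pneg : Ω → ℝ) (pv : ℝ)
    (hw : ∀ ω, 0 ≤ w ω) (hws : ∑ ω, w ω = 1)
    (hp : ∀ ω i, 0 ≤ p ω i)
    (hpartial : ∀ ω, ∀ j ≤ m, ∑ i ∈ Finset.range j, p ω i < 1)
    (hneg : ∀ ω, pneg ω = 1 - ∑ i ∈ Finset.range m, p ω i)
    (hE : ∑ ω, w ω * pneg ω = 1 - pv) :
    ∑ ω, w ω *
      (1 - (∏ j ∈ Finset.range m,
              (1 - p ω j / (1 - ∑ i ∈ Finset.range j, p ω i))) *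
           (1 - (1 - pneg ω / (1 - ∑ i ∈ Finset.range m, p ω i))))
      = pv :=
  subtree_acceptance_probability_general m w p pneg pv hws hpartial hE
end
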